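/- Let G be a k-factor-critical graph of order n > k + 2 with maximum degree Δ(G) = n − 1. Then G is minimally k-factor-critical if and only if G has exactly one vertex of degree n − 1 and n − 1 vertices of degree k + 1. -/

import Mathlib

open SimpleGraph

variable {V : Type*}

/-- `G` has a perfect matching covering exactly the vertex set `A`
(i.e. the graph obtained from `G` by deleting the vertices outside `A` has a perfect matching). -/
def HasPMOn (G : SimpleGraph V) (A : Set V) : Prop :=
  ∃ M : G.Subgraph, M.verts = A ∧ M.IsMatching

/-- `G` is `k`-factor-critical: deleting any `k` vertices leaves a graph with a perfect matching. -/
def FactorCritical [Fintype V] (G : SimpleGraph V) (k : ℕ) : Prop :=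
  ∀ S : Finset V, S.card = k → HasPMOn G ((↑S : Set V)ᶜ)

/-- `G` is minimally `k`-factor-critical. -/
def MinFactorCritical [Fintype V] (G : SimpleGraph V) (k : ℕ) : Prop :=
  FactorCritical G k ∧ ∀ u v : V, G.Adj u v → ¬ FactorCritical (G.deleteEdges {s(u,v)}) k

/-- The number of odd connected components of a graph. -/
noncomputable def oddComponents {W : Type*} (G : SimpleGraph W) : ℕ :=
  Nat.card {c : G.ConnectedComponent // Odd (Nat.card c.supp)}

/-! Let `w` be a universal vertex. Every vertex of a `k`-factor-critical graph has degree at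
least `k + 1`, and an edge with an endpoint `u` of degree `k + 1` is essential: once it is deleted,
the other `k` neighbours of `u` isolate `u`. Conversely, if `G - vw` is not `k`-factor-critical,
then for some `k`-set `S` every perfect matching of `G - S` uses `vw`. A neighbour `x ≠ w` of `v`
outside `S`, matched to `y`, would let us trade `vw, xy` for `vx, wy`; hence `N(v) ⊆ S ∪ {w}` and
`deg v = k + 1`. So `G` is minimal exactly when all vertices other than `w` have degree `k + 1`,
which is the degree count in the statement. -/

lemma Finset.card_filter_eq_card_sub_one_iff {α : Type*} [Fintype α] {p : α → Prop}
    [DecidablePred p] {w : α} (hw : ¬ p w) :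
    (Finset.univ.filter p).card = Fintype.card α - 1 ↔ ∀ x ≠ w, p x := by
  classical
  have : Finset.univ.filter p = (Finset.univ.erase w).filter p := by
    ext x
    by_cases hx : x = w <;> simp_all
  rw [this, ← Finset.card_univ, ← Finset.card_erase_of_mem (Finset.mem_univ w),
    Finset.card_filter_eq_iff]
  simp

namespace SimpleGraph.Subgraph

variable {G : SimpleGraph V} {M : G.Subgraph} {v w x y : V}

lemma IsMatching.deleteVerts_pair (hM : M.IsMatching) (hvw : M.Adj v w) :
    (M.deleteVerts {v, w}).IsMatching := by
  rintro a ⟨ha, hav⟩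
  obtain ⟨b, hab, huniq⟩ := hM ha
  have hbv : b ≠ v := by
    rintro rfl
    exact hav (Or.inr (hM.eq_of_adj_right hab hvw.symm))
  have hbw : b ≠ w := by
    rintro rfl
    exact hav (Or.inl (hM.eq_of_adj_right hab hvw))
  refine ⟨b, ?_, fun c hc => huniq c (deleteVerts_adj.1 hc).2.2.2.2⟩
  exact deleteVerts_adj.2 ⟨ha, hav, M.edge_vert hab.symm, by simp [hbv, hbw], hab⟩

lemma IsMatching.sup_subgraphOfAdj (hM : M.IsMatching) (hxy : G.Adj x y) (hx : x ∉ M.verts)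
    (hy : y ∉ M.verts) : (M ⊔ G.subgraphOfAdj hxy).IsMatching := by
  refine hM.sup (.subgraphOfAdj hxy) ?_
  rw [hM.support_eq_verts, support_subgraphOfAdj, Set.disjoint_insert_right,
    Set.disjoint_singleton_right]
  exact ⟨hx, hy⟩

/-- Replace the matching edges `vw` and `xy` by `vx` and `wy`. -/
lemma IsMatching.exists_swap (hM : M.IsMatching) (hvw : M.Adj v w) (hxy : M.Adj x y)
    (hvx : G.Adj v x) (hwy : G.Adj w y) (hxw : x ≠ w) :
    ∃ M' : G.Subgraph, M'.IsMatching ∧ M'.verts = M.verts ∧ ¬ M'.Adj v w := by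
  have hyv : y ≠ v := fun h => hxw (hM.eq_of_adj_right hxy (h ▸ hvw.symm))
  have hvw' : v ≠ w := (M.adj_sub hvw).ne
  have hxy' : x ≠ y := (M.adj_sub hxy).ne
  have hM₁ : (M.deleteVerts {v, w}).IsMatching := hM.deleteVerts_pair hvw
  have hxy₁ : (M.deleteVerts {v, w}).Adj x y := by
    rw [deleteVerts_adj]
    exact ⟨M.edge_vert hxy, by simp [hvx.ne', hxw], M.edge_vert hxy.symm,
      by simp [hyv, hwy.ne'], hxy⟩
  set M₂ := (M.deleteVerts {v, w}).deleteVerts {x, y}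
  have hM₂ : M₂.IsMatching := hM₁.deleteVerts_pair hxy₁
  have hM₂verts : M₂.verts = (M.verts \ {v, w}) \ {x, y} := rfl
  have hM₃ : (M₂ ⊔ G.subgraphOfAdj hvx).IsMatching :=
    hM₂.sup_subgraphOfAdj hvx (by simp [hM₂verts]) (by simp [hM₂verts])
  refine ⟨_, hM₃.sup_subgraphOfAdj hwy (by simp [hM₂verts, hvw'.symm, hxw.symm])
    (by simp [hM₂verts, hyv, hxy'.symm]), ?_, ?_⟩
  · have := M.edge_vert hvw; have := M.edge_vert hvw.symm
    have := M.edge_vert hxy; have := M.edge_vert hxy.symm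
    ext a
    simp only [verts_sup, hM₂verts, subgraphOfAdj_verts, Set.mem_union, Set.mem_sdiff,
      Set.mem_insert_iff, Set.mem_singleton_iff]
    grind
  · simp [M₂, hxw, hvw', hvw'.symm, hyv]

lemma IsMatching.hasPMOn_deleteEdges {A : Set V} (hM : M.IsMatching) (hA : M.verts = A)
    (hvw : ¬ M.Adj v w) : HasPMOn (G.deleteEdges {s(v, w)}) A := by
  refine ⟨M.comap (Hom.ofLE (G.deleteEdges_le _)), hA, fun a ha => ?_⟩
  obtain ⟨b, hab, huniq⟩ := hM ha
  refine ⟨b, ⟨?_, hab⟩, fun c hc => huniq c hc.2⟩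
  refine (SimpleGraph.deleteEdges_adj ..).2 ⟨M.adj_sub hab, ?_⟩
  rintro (h : s(a, b) = s(v, w))
  exact hvw ((M.adj_congr_of_sym2 h).1 hab)

lemma IsMatching.notMem_verts_of_not_hasPMOn_deleteEdges (hM : M.IsMatching)
    (hw : G.IsUniversal w) (h : ¬ HasPMOn (G.deleteEdges {s(v, w)}) M.verts)
    (hvx : G.Adj v x) (hxw : x ≠ w) : x ∉ M.verts := by
  have hvw : M.Adj v w := by
    by_contra hvw
    exact h (hM.hasPMOn_deleteEdges rfl hvw)
  intro hx
  obtain ⟨y, hxy, -⟩ := hM hx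
  have hyw : y ≠ w := fun hyw => hvx.ne (hM.eq_of_adj_right hvw (hyw ▸ hxy))
  obtain ⟨M', hM', hverts, hM'vw⟩ := hM.exists_swap hvw hxy hvx (hw hyw.symm) hxw
  exact h (hM'.hasPMOn_deleteEdges hverts hM'vw)

end SimpleGraph.Subgraph

section FactorCritical

variable [Fintype V] {G : SimpleGraph V} {k : ℕ} {u v w : V}

/-- The vertex `v` is isolated in `G - S`. -/
lemma not_factorCritical_of_neighborSet_subset {S : Finset V} (hS : S.card = k) (hv : v ∉ S)
    (h : G.neighborSet v ⊆ S) : ¬ FactorCritical G k := fun hG => by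
  obtain ⟨M, hverts, hM⟩ := hG S hS
  obtain ⟨x, hvx, -⟩ := hM (hverts ▸ hv : v ∈ M.verts)
  exact (hverts ▸ M.edge_vert hvx.symm : x ∈ (↑S : Set V)ᶜ) (h (M.adj_sub hvx))

lemma FactorCritical.succ_le_degree [DecidableRel G.Adj] (hG : FactorCritical G k)
    (hk : k < Fintype.card V) (v : V) : k + 1 ≤ G.degree v := by
  classical
  by_contra! hdeg
  have hsub : G.neighborFinset v ⊆ Finset.univ.erase v := fun x hx =>
    Finset.mem_erase.2 ⟨(G.mem_neighborFinset v x).1 hx |>.ne', Finset.mem_univ x⟩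
  obtain ⟨S, hNS, hSv, hS⟩ := Finset.exists_subsuperset_card_eq (n := k) hsub
    (by rw [card_neighborFinset_eq_degree]; omega)
    (by rw [Finset.card_erase_of_mem (Finset.mem_univ v), Finset.card_univ]; omega)
  refine not_factorCritical_of_neighborSet_subset (v := v) hS (fun hvS => ?_) (fun x hx => ?_) hG
  · exact (Finset.mem_erase.1 (hSv hvS)).1 rfl
  · exact hNS ((G.mem_neighborFinset v x).2 hx)

lemma not_factorCritical_deleteEdges_of_degree_eq [DecidableRel G.Adj] (huv : G.Adj u v)
    (hu : G.degree u = k + 1) : ¬ FactorCritical (G.deleteEdges {s(u, v)}) k := by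
  classical
  have hv : v ∈ G.neighborFinset u := (G.mem_neighborFinset u v).2 huv
  refine not_factorCritical_of_neighborSet_subset (S := (G.neighborFinset u).erase v) ?_
    (fun huS => G.loopless.irrefl u ((G.mem_neighborFinset u u).1 (Finset.mem_of_mem_erase huS)))
    (fun x hx => ?_)
  · rw [Finset.card_erase_of_mem hv, card_neighborFinset_eq_degree, hu, Nat.add_sub_cancel]
  · obtain ⟨hux, hx⟩ := deleteEdges_adj.1 hx
    refine Finset.mem_erase.2 ⟨?_, (G.mem_neighborFinset u x).2 hux⟩
    rintro rfl
    exact hx rfl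

lemma FactorCritical.degree_le_of_not_factorCritical_deleteEdges [DecidableRel G.Adj]
    (hG : FactorCritical G k) (hw : G.IsUniversal w)
    (h : ¬ FactorCritical (G.deleteEdges {s(v, w)}) k) : G.degree v ≤ k + 1 := by
  classical
  obtain ⟨S, hS, hSno⟩ : ∃ S : Finset V, S.card = k ∧ ¬ HasPMOn _ ((↑S : Set V)ᶜ) := by
    simpa [FactorCritical] using h
  obtain ⟨M, hverts, hM⟩ := hG S hS
  have hsub : G.neighborFinset v ⊆ insert w S := fun x hx => by
    by_contra hxS
    rw [Finset.mem_insert, not_or] at hxS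
    refine hM.notMem_verts_of_not_hasPMOn_deleteEdges hw (hverts ▸ hSno)
      ((G.mem_neighborFinset v x).1 hx) hxS.1 ?_
    simpa [hverts] using hxS.2
  calc G.degree v = (G.neighborFinset v).card := (card_neighborFinset_eq_degree G v).symm
    _ ≤ (insert w S).card := Finset.card_le_card hsub
    _ ≤ k + 1 := hS ▸ Finset.card_insert_le w S

lemma minFactorCritical_iff_forall_ne_degree_eq [DecidableRel G.Adj] (hG : FactorCritical G k)
    (hw : G.IsUniversal w) (hk : k < Fintype.card V) :
    MinFactorCritical G k ↔ ∀ v ≠ w, G.degree v = k + 1 := by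
  refine ⟨fun hmin v hvw => ?_, fun hdeg => ⟨hG, fun u v huv => ?_⟩⟩
  · exact le_antisymm
      (hG.degree_le_of_not_factorCritical_deleteEdges hw (hmin.2 v w (hw hvw.symm).symm))
      (hG.succ_le_degree hk v)
  · by_cases huw : u = w
    · rw [Sym2.eq_swap]
      exact not_factorCritical_deleteEdges_of_degree_eq huv.symm (hdeg v (huw ▸ huv.ne'))
    · exact not_factorCritical_deleteEdges_of_degree_eq huv (hdeg u huw)

end FactorCritical

theorem minFactorCritical_iff_maxDegree_n_sub_one_general [Fintype V]
    (G : SimpleGraph V) [DecidableRel G.Adj] (n k : ℕ)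
    (hn : Fintype.card V = n) (hnk : n > k + 2)
    (hG : FactorCritical G k) (hmax : G.maxDegree = n - 1) :
    MinFactorCritical G k ↔
      ((Finset.univ.filter (fun v : V => G.degree v = n - 1)).card = 1 ∧
        (Finset.univ.filter (fun v : V => G.degree v = k + 1)).card = n - 1) := by
  have : Nonempty V := Fintype.card_pos_iff.1 (by omega)
  obtain ⟨w, hw⟩ := G.exists_maximal_degree_vertex
  have hwdeg : G.degree w = n - 1 := hw ▸ hmax
  have hwu : G.IsUniversal w := (G.degree_eq_card_sub_one w).1 (hn ▸ hwdeg)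
  have hcount := Finset.card_filter_eq_card_sub_one_iff (p := fun v => G.degree v = k + 1)
    (w := w) (by omega)
  rw [hn] at hcount
  rw [minFactorCritical_iff_forall_ne_degree_eq hG hwu (by omega)]
  refine ⟨fun hdeg => ⟨Finset.card_eq_one.2 ⟨w, ?_⟩, hcount.2 hdeg⟩, fun h => hcount.1 h.2⟩
  · ext v
    simp only [Finset.mem_filter, Finset.mem_univ, true_and, Finset.mem_singleton]
    refine ⟨fun hv => ?_, fun hv => hv ▸ hwdeg⟩
    by_contra hvw
    have := hdeg v hvw
    omega

theorem minFactorCritical_iff_maxDegree_n_sub_one [Fintype V] [DecidableEq V]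
    (G : SimpleGraph V) [DecidableRel G.Adj] (n k : ℕ)
    (hn : Fintype.card V = n) (hnk : n > k + 2)
    (hG : FactorCritical G k) (hmax : G.maxDegree = n - 1) :
    MinFactorCritical G k ↔
      ((Finset.univ.filter (fun v : V => G.degree v = n - 1)).card = 1 ∧
        (Finset.univ.filter (fun v : V => G.degree v = k + 1)).card = n - 1) :=
  minFactorCritical_iff_maxDegree_n_sub_one_general G n k hn hnk hG hmax
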